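/- The Casimir element C = M₁² − {M₂, L} + 3L² of the stabilizing algebra is realized by the identity operator on the quadratic grid: for every function f : ℂ → ℂ and every x ∈ ℂ with x(x−1)(x+1) ≠ 0, (M₁(M₁f))(x) − (M₂(Lf))(x) − (L(M₂f))(x) + 3(L(Lf))(x) = f(x). -/

import Mathlib

/-!
Each of `L`, `M₁`, `M₂` is a two-point operator `f ↦ a(x) f(x+1) + b(x) f(x-1)`, so every
quadratic expression in them is a three-point operator in `f(x+2), f(x), f(x-2)`. In the Casimir
combination the coefficient of `f(x+2)` is
`((4x² - 1) - (2x² - 2x + 1) - (2x² + 2x + 1) + 3) / (16 x (x+1)) = 0`, that of `f(x-2)` vanishes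
by the symmetry `x ↦ -x`, and that of `f(x)` simplifies to `1`.
-/

noncomputable section

/-- The S–Heun lowering operator L on the quadratic grid λ_x = x². -/
def opL (f : ℂ → ℂ) : ℂ → ℂ := fun x => (f (x + 1) - f (x - 1)) / (4 * x)

/-- The stabilizing S–Heun operator M₁ on the quadratic grid. -/
def opM1 (f : ℂ → ℂ) : ℂ → ℂ :=
  fun x => ((2 * x - 1) * f (x + 1) + (2 * x + 1) * f (x - 1)) / (4 * x)

/-- The stabilizing S–Heun operator M₂ on the quadratic grid. -/
def opM2 (f : ℂ → ℂ) : ℂ → ℂ :=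
  fun x => ((x ^ 2 + (x - 1) ^ 2) * f (x + 1) - ((x + 1) ^ 2 + x ^ 2) * f (x - 1)) / (4 * x)

/-- The raising S–Heun operator R₁ = λ_x M₁ on the quadratic grid. -/
def opR1 (f : ℂ → ℂ) : ℂ → ℂ := fun x => x ^ 2 * opM1 f x

/-- The raising S–Heun operator R₂ = λ_x M₂ on the quadratic grid. -/
def opR2 (f : ℂ → ℂ) : ℂ → ℂ := fun x => x ^ 2 * opM2 f x

section TwoPoint

variable {R : Type*} [Ring R]

def twoPoint (a b f : R → R) : R → R :=
  fun x => a x * f (x + 1) + b x * f (x - 1)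

theorem twoPoint_twoPoint_apply (a b c d f : R → R) (x : R) :
    twoPoint a b (twoPoint c d f) x =
      a x * c (x + 1) * f (x + 2) + (a x * d (x + 1) + b x * c (x - 1)) * f x +
        b x * d (x - 1) * f (x - 2) := by
  simp only [twoPoint, add_sub_cancel_right, sub_add_cancel, add_assoc, one_add_one_eq_two,
    sub_sub, mul_add, add_mul, mul_assoc]

end TwoPoint

theorem opL_eq_twoPoint : opL = twoPoint (fun x => 1 / (4 * x)) (fun x => -1 / (4 * x)) := by
  funext f x
  simp only [opL, twoPoint]
  ring

theorem opM1_eq_twoPoint :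
    opM1 = twoPoint (fun x => (2 * x - 1) / (4 * x)) (fun x => (2 * x + 1) / (4 * x)) := by
  funext f x
  simp only [opM1, twoPoint]
  ring

theorem opM2_eq_twoPoint :
    opM2 = twoPoint (fun x => (x ^ 2 + (x - 1) ^ 2) / (4 * x))
      (fun x => -((x + 1) ^ 2 + x ^ 2) / (4 * x)) := by
  funext f x
  simp only [opM2, twoPoint]
  ring

theorem stmt7 (f : ℂ → ℂ) (x : ℂ) (hx : x * (x - 1) * (x + 1) ≠ 0) :
    opM1 (opM1 f) x - opM2 (opL f) x - opL (opM2 f) x + 3 * opL (opL f) x = f x := by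
  obtain ⟨⟨hx_zero, hx_sub⟩, hx_add⟩ := mul_ne_zero_iff.mp hx |>.imp_left mul_ne_zero_iff.mp
  rw [opM1_eq_twoPoint, opM2_eq_twoPoint, opL_eq_twoPoint]
  simp only [twoPoint_twoPoint_apply]
  field_simp
  ring
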